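/- arXiv:1803.06871 — 5 statements merged into one kernel-verified Lean document; each statement's English description precedes it below -/
import Mathlib

section
/- If x lies in the distance preserving region of x_i and y lies in the distance preserving region of x_j (for distinct points x_i, x_j of χ), then ‖x − y‖ ≥ ‖x_i − x_j‖. -/
/-! Each constraint of the DPCIR of `xi` against `xj` simplifies to `⟪xi - xj, x - xi⟫ ≥ 0`:
`x` lies beyond `xi` in the direction `xi - xj`, and likewise `y` lies beyond `xj` in the
direction `xj - xi`. Hence `⟪xi - xj, x - y⟫ ≥ ‖xi - xj‖²`, and Cauchy–Schwarz gives
`‖x - y‖ ≥ ‖xi - xj‖`. -/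

open scoped RealInnerProductSpace

abbrev Pt := EuclideanSpace ℝ (Fin 2)

section InnerProductSpace

variable {E : Type*} [NormedAddCommGroup E] [InnerProductSpace ℝ E]

theorem dpcir_constraint_iff (a b x : E) :
    ⟪a - b, x⟫ ≥ ⟪a - b, (2:ℝ)⁻¹ • (a + b)⟫ + ‖a - b‖ ^ 2 / 2 ↔ 0 ≤ ⟪a - b, x - a⟫ := by
  have hshift : ⟪a - b, (2:ℝ)⁻¹ • (a + b)⟫ + ‖a - b‖ ^ 2 / 2 = ⟪a - b, a⟫ := by
    simp only [real_inner_smul_right, inner_add_right, inner_sub_left, norm_sub_sq_real,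
      real_inner_self_eq_norm_sq, real_inner_comm a b]
    ring
  rw [hshift, inner_sub_right, sub_nonneg]

theorem norm_le_of_norm_sq_le_inner {v w : E} (h : ‖v‖ ^ 2 ≤ ⟪v, w⟫) : ‖v‖ ≤ ‖w‖ := by
  rcases (norm_nonneg v).eq_or_lt with hv | hv
  · rw [← hv]
    exact norm_nonneg w
  · have : ‖v‖ * ‖v‖ ≤ ‖v‖ * ‖w‖ := by
      nlinarith [real_inner_le_norm v w]
    exact le_of_mul_le_mul_left this hv

theorem norm_sub_le_of_inner_nonneg {a b x y : E}
    (hx : 0 ≤ ⟪a - b, x - a⟫) (hy : 0 ≤ ⟪b - a, y - b⟫) : ‖a - b‖ ≤ ‖x - y‖ := by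
  apply norm_le_of_norm_sq_le_inner
  have hsplit : ⟪a - b, x - y⟫ = ⟪a - b, x - a⟫ + ‖a - b‖ ^ 2 + ⟪b - a, y - b⟫ := by
    rw [← real_inner_self_eq_norm_sq, ← neg_sub a b, inner_neg_left, ← sub_eq_add_neg,
      ← inner_add_right, ← inner_sub_right]
    congr 1
    abel
  linarith

end InnerProductSpace

theorem dpcir_distance_preserving (χ : Finset Pt) (xi xj : Pt)
    (hxi : xi ∈ χ) (hxj : xj ∈ χ) (hne : xi ≠ xj) (x y : Pt)
    (hx : ∀ xk ∈ χ, xk ≠ xi →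
      ⟪xi - xk, x⟫ ≥ ⟪xi - xk, (2:ℝ)⁻¹ • (xi + xk)⟫ + ‖xi - xk‖^2 / 2)
    (hy : ∀ xk ∈ χ, xk ≠ xj →
      ⟪xj - xk, y⟫ ≥ ⟪xj - xk, (2:ℝ)⁻¹ • (xj + xk)⟫ + ‖xj - xk‖^2 / 2) :
    ‖x - y‖ ≥ ‖xi - xj‖ :=
  norm_sub_le_of_inner_nonneg ((dpcir_constraint_iff xi xj x).1 (hx xj hxj hne.symm))
    ((dpcir_constraint_iff xj xi y).1 (hy xi hxi hne))
end

section
/- If the origin lies in the convex hull of χ, then for every x_i ∈ χ and every x in the DPCIR of x_i, ‖x‖ ≥ ‖x_i‖, with equality only when x = x_i. -/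
open scoped RealInnerProductSpace

theorem dpcir_norm_increasing (χ : Finset Pt) (xi : Pt) (hxi : xi ∈ χ)
    (h0 : (0 : Pt) ∈ convexHull ℝ (χ : Set Pt)) (x : Pt)
    (hx : ∀ xj ∈ χ, xj ≠ xi → ⟪xi - xj, x - xi⟫ ≥ 0) :
    ‖x‖ ≥ ‖xi‖ ∧ (‖x‖ = ‖xi‖ → x = xi) := by
  -- extract convex combination
  rw [Finset.convexHull_eq] at h0
  obtain ⟨w, hw0, hw1, hwc⟩ := h0
  -- key: ⟪xi, x - xi⟫ ≥ 0
  have hkey : 0 ≤ ⟪xi, x - xi⟫ := by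
    have hsum : ∑ j ∈ χ, w j • j = (0 : Pt) := by
      have := hwc
      rwa [Finset.centerMass, hw1, inv_one, one_smul] at this
    have hexp : ⟪xi, x - xi⟫ = ∑ j ∈ χ, w j * ⟪xi - j, x - xi⟫ := by
      have : ∑ j ∈ χ, w j * ⟪xi - j, x - xi⟫
          = ∑ j ∈ χ, (w j * ⟪xi, x - xi⟫ - ⟪w j • j, x - xi⟫) := by
        apply Finset.sum_congr rfl
        intro j _
        rw [inner_sub_left, real_inner_smul_left]
        ring
      rw [this, Finset.sum_sub_distrib, ← Finset.sum_mul, hw1, one_mul,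
        ← sum_inner, hsum, inner_zero_left, sub_zero]
    rw [hexp]
    apply Finset.sum_nonneg
    intro j hj
    rcases eq_or_ne j xi with rfl | hne
    · simp
    · exact mul_nonneg (hw0 j hj) (hx j hj hne)
  have hsq : ‖x‖ ^ 2 = ‖xi‖ ^ 2 + 2 * ⟪xi, x - xi⟫ + ‖x - xi‖ ^ 2 := by
    have h := norm_add_sq_real xi (x - xi)
    have he : xi + (x - xi) = x := by abel
    rw [he] at h
    exact h
  have h1 : ‖xi‖ ^ 2 + ‖x - xi‖ ^ 2 ≤ ‖x‖ ^ 2 := by nlinarith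
  have hge : ‖x‖ ≥ ‖xi‖ := by
    have := sq_nonneg ‖x - xi‖
    nlinarith [norm_nonneg x, norm_nonneg xi]
  refine ⟨hge, fun heq => ?_⟩
  have heq2 : ‖x‖ ^ 2 = ‖xi‖ ^ 2 := by rw [heq]
  have h2 : ‖x - xi‖ ^ 2 ≤ 0 := by linarith
  have h3 : ‖x - xi‖ = 0 := by nlinarith [norm_nonneg (x - xi)]
  exact sub_eq_zero.mp (norm_eq_zero.mp h3)
end

section
/- If the origin does not lie in the convex hull of χ, then there exist a point x_l ∈ χ and a point x in the DPCIR of x_l such that ‖x‖ < ‖x_l‖. (Converse direction of the norm-monotonicity lemma.) -/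
/-!
Separating `0` from the convex hull gives a direction `p` with `⟪v, p⟫ > 0` on all of `χ`.
At the point `xl` of `χ` minimising `⟪·, p⟫`, the whole ray `xl - t • p` (`t ≥ 0`) lies in the
DPCIR of `xl`, and since `⟪xl, p⟫ > 0` a short step along it decreases the norm.
-/

open scoped RealInnerProductSpace

def dpcir {E : Type*} [NormedAddCommGroup E] [InnerProductSpace ℝ E] (s : Set E) (xi : E) :
    Set E :=
  {x | ∀ xj ∈ s, xj ≠ xi → 0 ≤ ⟪xi - xj, x - xi⟫}

section InnerProductSpace

variable {E : Type*} [NormedAddCommGroup E] [InnerProductSpace ℝ E]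

theorem exists_forall_inner_pos_of_zero_notMem_convexHull [CompleteSpace E] {s : Set E}
    (hs : s.Finite) (h0 : (0 : E) ∉ convexHull ℝ s) : ∃ p : E, ∀ v ∈ s, 0 < ⟪v, p⟫ := by
  obtain ⟨f, u, hf0, hf⟩ :=
    geometric_hahn_banach_point_closed (convex_convexHull ℝ s) (hs.isClosed_convexHull ℝ) h0
  refine ⟨(InnerProductSpace.toDual ℝ E).symm f, fun v hv => ?_⟩
  rw [real_inner_comm, InnerProductSpace.toDual_symm_apply]
  have := hf v (subset_convexHull ℝ s hv)
  rw [map_zero] at hf0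
  linarith

theorem sub_smul_mem_dpcir {s : Set E} {xl p : E} (hmin : ∀ xj ∈ s, ⟪xl, p⟫ ≤ ⟪xj, p⟫)
    {t : ℝ} (ht : 0 ≤ t) : xl - t • p ∈ dpcir s xl := by
  intro xj hxj _
  rw [sub_sub_cancel_left, inner_neg_right, inner_smul_right, inner_sub_left]
  nlinarith [hmin xj hxj]

theorem norm_sub_smul_lt_norm {x p : E} {t : ℝ} (ht : 0 < t) (htp : t * ‖p‖ ^ 2 < 2 * ⟪x, p⟫) :
    ‖x - t • p‖ < ‖x‖ := by
  have hsq : ‖x - t • p‖ ^ 2 = ‖x‖ ^ 2 - t * (2 * ⟪x, p⟫ - t * ‖p‖ ^ 2) := by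
    rw [norm_sub_sq_real, inner_smul_right, norm_smul, mul_pow, Real.norm_eq_abs, sq_abs]
    ring
  have : ‖x - t • p‖ ^ 2 < ‖x‖ ^ 2 := by
    rw [hsq]
    nlinarith
  exact lt_of_pow_lt_pow_left₀ 2 (norm_nonneg x) this

theorem exists_pos_norm_sub_smul_lt_norm {x p : E} (hxp : 0 < ⟪x, p⟫) :
    ∃ t : ℝ, 0 < t ∧ ‖x - t • p‖ < ‖x‖ := by
  have hp : 0 < ‖p‖ ^ 2 := by
    refine pow_pos (norm_pos_iff.2 ?_) 2
    rintro rfl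
    simp at hxp
  refine ⟨⟪x, p⟫ / ‖p‖ ^ 2, div_pos hxp hp, norm_sub_smul_lt_norm (div_pos hxp hp) ?_⟩
  rw [div_mul_cancel₀ _ hp.ne']
  linarith

end InnerProductSpace

theorem dpcir_norm_decrease_exists (χ : Finset Pt) (hχ : χ.Nonempty)
    (h0 : (0 : Pt) ∉ convexHull ℝ (χ : Set Pt)) :
    ∃ xl ∈ χ, ∃ x : Pt,
      (∀ xj ∈ χ, xj ≠ xl → ⟪xl - xj, x - xl⟫ ≥ 0) ∧ ‖x‖ < ‖xl‖ := by
  obtain ⟨p, hp⟩ := exists_forall_inner_pos_of_zero_notMem_convexHull χ.finite_toSet h0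
  obtain ⟨xl, hxl, hmin⟩ := χ.exists_min_image (⟪·, p⟫) hχ
  obtain ⟨t, ht, hlt⟩ := exists_pos_norm_sub_smul_lt_norm (hp xl hxl)
  have hx : xl - t • p ∈ dpcir (χ : Set Pt) xl := sub_smul_mem_dpcir hmin ht.le
  exact ⟨xl, hxl, xl - t • p, fun xj hxj => hx xj hxj, hlt⟩
end

section
/- If the Voronoi region of x_i (with respect to finite χ ⊆ ℝ²) is bounded, then the DPCIR of x_i consists of the single point x_i. -/
open scoped RealInnerProductSpace

theorem bounded_voronoi_dpcir_singleton (χ : Finset Pt) (xi : Pt) (hxi : xi ∈ χ)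
    (hcard : 3 ≤ χ.card) (hcol : ¬ Collinear ℝ (χ : Set Pt))
    (hbd : Bornology.IsBounded {x : Pt | ∀ xj ∈ χ, xj ≠ xi → dist x xi ≤ dist x xj}) :
    {x : Pt | ∀ xj ∈ χ, xj ≠ xi → ⟪xi - xj, x - xi⟫ ≥ 0} = {xi} := by
  ext x
  simp only [Set.mem_setOf_eq, Set.mem_singleton_iff]
  constructor
  · intro hx
    by_contra hne
    obtain ⟨R, hR⟩ := (Metric.isBounded_iff_subset_closedBall xi).mp hbd
    have hxx : (0:ℝ) < ‖x - xi‖ := by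
      rw [norm_pos_iff]
      exact sub_ne_zero.mpr hne
    set t : ℝ := (max R 0 + 1) / ‖x - xi‖ with ht
    have ht0 : 0 ≤ t := div_nonneg (by positivity) hxx.le
    set y : Pt := xi + t • (x - xi) with hy
    have hyx : y - xi = t • (x - xi) := by simp [hy]
    have hmem : y ∈ {x : Pt | ∀ xj ∈ χ, xj ≠ xi → dist x xi ≤ dist x xj} := by
      intro xj hj hjne
      have hin : ⟪xi - xj, y - xi⟫ ≥ 0 := by
        rw [hyx, real_inner_smul_right]
        exact mul_nonneg ht0 (hx xj hj hjne)
      have h1 : dist y xj ^ 2 = ‖y - xi‖^2 + 2 * ⟪y - xi, xi - xj⟫ + ‖xi - xj‖^2 := by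
        rw [dist_eq_norm]
        have h : y - xj = (y - xi) + (xi - xj) := by abel
        rw [h, norm_add_sq_real]
      have h2 : dist y xi ^ 2 = ‖y - xi‖^2 := by rw [dist_eq_norm]
      have hsym : ⟪y - xi, xi - xj⟫ = ⟪xi - xj, y - xi⟫ := real_inner_comm _ _
      nlinarith [dist_nonneg (x := y) (y := xj), dist_nonneg (x := y) (y := xi),
        norm_nonneg (xi - xj)]
    have hball := hR hmem
    rw [Metric.mem_closedBall] at hball
    have hdy : dist y xi = max R 0 + 1 := by
      rw [dist_eq_norm, hyx, norm_smul, Real.norm_eq_abs, abs_of_nonneg ht0, ht,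
        div_mul_cancel₀ _ hxx.ne']
    rw [hdy] at hball
    have : max R 0 + 1 ≤ max R 0 := le_trans hball (le_max_left R 0)
    linarith
  · intro h xj hj hjne
    simp [h]
end

section
/- A point x_i ∈ χ lies on the boundary of conv(χ) if and only if its Voronoi region with respect to χ is unbounded. -/
open scoped RealInnerProductSpace

/-!
Expanding `‖x - q‖²` around `p`, `x` is at least as close to `p` as to `q` iff
`2 ⟪x - p, q - p⟫ ≤ ‖q - p‖²`. If `p` is on the boundary of the hull, a supporting hyperplane at
`p` (or, when the hull is flat, any normal to its affine span) gives a direction `v` with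
`⟪q - p, v⟫ ≤ 0` for all sites `q`, and the whole ray `p + t • v` lies in the cell. If instead a
ball `closedBall p ε` lies in the hull, then for `x` in the cell every `⟪x - p, z⟫` with
`‖z‖ ≤ ε` is bounded by a maximum over the sites, which bounds `ε ‖x - p‖`.
-/

open Bornology Metric Set

section Voronoi

variable {E : Type*} [NormedAddCommGroup E] [InnerProductSpace ℝ E]

def voronoiCell (s : Set E) (p : E) : Set E :=
  {x | ∀ q ∈ s, q ≠ p → dist x p ≤ dist x q}

theorem dist_le_dist_iff_two_inner_le {x p q : E} :
    dist x p ≤ dist x q ↔ 2 * ⟪x - p, q - p⟫ ≤ ‖q - p‖ ^ 2 := by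
  have hexpand : ‖x - q‖ ^ 2 = ‖x - p‖ ^ 2 - 2 * ⟪x - p, q - p⟫ + ‖q - p‖ ^ 2 := by
    rw [← norm_sub_sq_real, sub_sub_sub_cancel_right]
  rw [dist_eq_norm, dist_eq_norm, ← sq_le_sq₀ (norm_nonneg _) (norm_nonneg _), hexpand]
  constructor <;> intro h <;> linarith

theorem mul_norm_le_of_forall_inner_le {w : E} {ε C : ℝ} (hε : 0 ≤ ε)
    (h : ∀ z : E, ‖z‖ ≤ ε → ⟪w, z⟫ ≤ C) : ε * ‖w‖ ≤ C := by
  have hz : ‖(ε * ‖w‖⁻¹) • w‖ ≤ ε := by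
    rw [norm_smul, Real.norm_eq_abs, abs_of_nonneg (by positivity), mul_assoc]
    exact mul_le_of_le_one_right hε (inv_mul_le_one_of_le₀ le_rfl (norm_nonneg w))
  calc ε * ‖w‖ = ⟪w, (ε * ‖w‖⁻¹) • w⟫ := by
        rw [real_inner_smul_right, real_inner_self_eq_norm_sq]
        rcases eq_or_ne ‖w‖ 0 with hw | hw
        · simp [hw]
        · field_simp
    _ ≤ C := h _ hz

theorem add_smul_mem_voronoiCell {s : Set E} {p v : E} (hv : ∀ q ∈ s, ⟪q - p, v⟫ ≤ 0)
    {t : ℝ} (ht : 0 ≤ t) : p + t • v ∈ voronoiCell s p := by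
  intro q hq _
  rw [dist_le_dist_iff_two_inner_le, add_sub_cancel_left, real_inner_smul_left,
    real_inner_comm]
  nlinarith [hv q hq, sq_nonneg ‖q - p‖]

theorem not_isBounded_voronoiCell_of_inner_nonpos {s : Set E} {p v : E} (hv0 : v ≠ 0)
    (hv : ∀ q ∈ s, ⟪q - p, v⟫ ≤ 0) : ¬ IsBounded (voronoiCell s p) := by
  intro hbdd
  obtain ⟨R, hR⟩ := hbdd.subset_closedBall p
  have hvpos : 0 < ‖v‖ := norm_pos_iff.2 hv0
  have hfar := hR (add_smul_mem_voronoiCell hv (t := (|R| + 1) / ‖v‖) (by positivity))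
  rw [mem_closedBall, dist_eq_norm, add_sub_cancel_left, norm_smul, Real.norm_eq_abs,
    abs_of_pos (by positivity), div_mul_cancel₀ _ hvpos.ne'] at hfar
  linarith [le_abs_self R]

theorem isBounded_voronoiCell_of_mem_interior_convexHull {s : Set E} {p : E}
    (hs : IsBounded s) (hp : p ∈ interior (convexHull ℝ s)) : IsBounded (voronoiCell s p) := by
  obtain ⟨ε, hε, hball⟩ := nhds_basis_closedBall.mem_iff.1 (mem_interior_iff_mem_nhds.1 hp)
  obtain ⟨R, hR⟩ := hs.subset_closedBall p
  refine (isBounded_closedBall (x := p) (r := R ^ 2 / (2 * ε))).subset fun x hx => ?_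
  have hinner : ∀ z : E, ‖z‖ ≤ ε → ⟪x - p, z⟫ ≤ R ^ 2 / 2 := by
    intro z hz
    have hpz : p + z ∈ convexHull ℝ s := hball (by simpa [mem_closedBall, dist_eq_norm])
    obtain ⟨q, hq, hle⟩ := ((innerₛₗ ℝ (x - p)).convexOn (convex_convexHull ℝ s)
      |>.exists_ge_of_mem_convexHull (subset_convexHull ℝ s) hpz)
    simp only [innerₛₗ_apply_apply, inner_add_right] at hle
    have hqR : ‖q - p‖ ≤ R := by simpa [dist_eq_norm] using hR hq
    have hcell : 2 * ⟪x - p, q - p⟫ ≤ ‖q - p‖ ^ 2 := by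
      rcases eq_or_ne q p with rfl | hqp
      · simp
      · exact dist_le_dist_iff_two_inner_le.1 (hx q hq hqp)
    rw [inner_sub_right] at hcell
    nlinarith [norm_nonneg (q - p)]
  have := mul_norm_le_of_forall_inner_le hε.le hinner
  rw [mem_closedBall, dist_eq_norm, le_div_iff₀ (by positivity)]
  linarith

theorem exists_ne_zero_forall_inner_sub_nonpos [FiniteDimensional ℝ E] {A : Set E} {p : E}
    (hA : Convex ℝ A) (hpA : p ∈ affineSpan ℝ A) (hp : p ∉ interior A) :
    ∃ v : E, v ≠ 0 ∧ ∀ a ∈ A, ⟪a - p, v⟫ ≤ 0 := by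
  by_cases hint : (interior A).Nonempty
  · obtain ⟨f, hf0, hf⟩ := geometric_hahn_banach_of_nonempty_interior_point hA hp hint
    refine ⟨(InnerProductSpace.toDual ℝ E).symm f, by simpa using hf0, fun a ha => ?_⟩
    rw [real_inner_comm, InnerProductSpace.toDual_symm_apply, map_sub]
    linarith [hf a ha]
  · have hdir : (affineSpan ℝ A).direction ≠ ⊤ := fun htop =>
      hint (hA.interior_nonempty_iff_affineSpan_eq_top.2
        ((AffineSubspace.direction_eq_top_iff_of_nonempty ⟨p, hpA⟩).1 htop))
    obtain ⟨v, hv, hv0⟩ := Submodule.exists_mem_ne_zero_of_ne_bot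
      (mt Submodule.orthogonal_eq_bot_iff.1 hdir)
    exact ⟨v, hv0, fun a ha => le_of_eq <| (Submodule.mem_orthogonal _ v).1 hv _
      (AffineSubspace.vsub_mem_direction (subset_affineSpan ℝ A ha) hpA)⟩

end Voronoi

theorem boundary_iff_unbounded_voronoi_general (χ : Finset Pt) (xi : Pt) (hxi : xi ∈ χ) :
    xi ∉ interior (convexHull ℝ (χ : Set Pt)) ↔
      ¬ Bornology.IsBounded {x : Pt | ∀ xj ∈ χ, xj ≠ xi → dist x xi ≤ dist x xj} := by
  change _ ↔ ¬ IsBounded (voronoiCell (χ : Set Pt) xi)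
  constructor
  · intro hboundary
    have hspan : xi ∈ affineSpan ℝ (convexHull ℝ (χ : Set Pt)) := by
      rw [affineSpan_convexHull]
      exact subset_affineSpan ℝ _ hxi
    obtain ⟨v, hv0, hv⟩ :=
      exists_ne_zero_forall_inner_sub_nonpos (convex_convexHull ℝ _) hspan hboundary
    exact not_isBounded_voronoiCell_of_inner_nonpos hv0
      (fun q hq => hv q (subset_convexHull ℝ _ hq))
  · exact mt (isBounded_voronoiCell_of_mem_interior_convexHull χ.finite_toSet.isBounded)

theorem boundary_iff_unbounded_voronoi (χ : Finset Pt) (xi : Pt) (hxi : xi ∈ χ)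
    (hcard : 2 ≤ χ.card) :
    xi ∉ interior (convexHull ℝ (χ : Set Pt)) ↔
      ¬ Bornology.IsBounded {x : Pt | ∀ xj ∈ χ, xj ≠ xi → dist x xi ≤ dist x xj} :=
  boundary_iff_unbounded_voronoi_general χ xi hxi
end
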